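/- arXiv:1006.3502 — 3 statements merged into one kernel-verified Lean document; each statement's English description precedes it below -/
import Mathlib

section
/- For a pure state |ψ⟩ in C^d ⊗ C^d with Schmidt decomposition |ψ⟩ = Σ_i λ_i |ii⟩ (λ_i ≥ 0, Σ_i λ_i² = 1), the fully entangled fraction equals F(|ψ⟩) = (1/d)(Σ_i λ_i)². -/
open Matrix Complex BigOperators Finset

noncomputable section

/-!
For a pure state, the fidelity with `(U ⊗ I)|ψ⁺⟩` is `|⟨ψ|(U ⊗ I)|ψ⁺⟩|²`, and for the Schmidt
state this overlap is `(1/√d) ∑ᵢ λᵢ Uᵢᵢ`. Entries of a unitary have modulus at most `1`, so the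
overlap is at most `(∑ᵢ λᵢ)/√d`, with equality at `U = 1`.
-/

/-- The maximally entangled state `|ψ⁺⟩ = (1/√d) ∑ₖ |kk⟩` on `ℂ^d ⊗ ℂ^d`. -/
def psiPlus (d : ℕ) : (Fin d × Fin d) → ℂ :=
  fun p => if p.1 = p.2 then ((1 / Real.sqrt d : ℝ) : ℂ) else 0

/-- `U ⊗ I` acting on `ℂ^d ⊗ ℂ^d`. -/
def tensorI {d : ℕ} (U : Matrix (Fin d) (Fin d) ℂ) :
    Matrix (Fin d × Fin d) (Fin d × Fin d) ℂ :=
  fun p q => U p.1 q.1 * (if p.2 = q.2 then 1 else 0)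

/-- The rank-one projector `|ψ⟩⟨ψ|`. -/
def outer {n : Type*} [Fintype n] (ψ : n → ℂ) : Matrix n n ℂ :=
  Matrix.vecMulVec ψ (star ψ)

/-- The fully entangled fraction
`F(ρ) = max_U ⟨ψ⁺| (U† ⊗ I) ρ (U ⊗ I) |ψ⁺⟩`. -/
def fef (d : ℕ) (ρ : Matrix (Fin d × Fin d) (Fin d × Fin d) ℂ) : ℝ :=
  sSup { x : ℝ | ∃ U ∈ Matrix.unitaryGroup (Fin d) ℂ,
    x = (star (tensorI U *ᵥ psiPlus d) ⬝ᵥ (ρ *ᵥ (tensorI U *ᵥ psiPlus d))).re }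

lemma re_star_dotProduct_outer_mulVec {n : Type*} [Fintype n] (ψ v : n → ℂ) :
    (star v ⬝ᵥ (outer ψ *ᵥ v)).re = normSq (star ψ ⬝ᵥ v) := by
  rw [outer, vecMulVec_mulVec, op_smul_eq_smul, dotProduct_smul, smul_eq_mul,
    star_dotProduct v ψ, RCLike.star_def, mul_conj, ofReal_re]

lemma tensorI_mulVec_psiPlus {d : ℕ} (U : Matrix (Fin d) (Fin d) ℂ) (p : Fin d × Fin d) :
    (tensorI U *ᵥ psiPlus d) p = U p.1 p.2 * ((1 / Real.sqrt d : ℝ) : ℂ) := by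
  simp [mulVec, dotProduct, tensorI, psiPlus, Fintype.sum_prod_type]

def schmidtState {d : ℕ} (lam : Fin d → ℝ) : Fin d × Fin d → ℂ :=
  fun p => if p.1 = p.2 then (lam p.1 : ℂ) else 0

lemma star_schmidtState_dotProduct_tensorI_mulVec_psiPlus {d : ℕ} (lam : Fin d → ℝ)
    (U : Matrix (Fin d) (Fin d) ℂ) :
    star (schmidtState lam) ⬝ᵥ (tensorI U *ᵥ psiPlus d) =
      (∑ i, (lam i : ℂ) * U i i) * ((1 / Real.sqrt d : ℝ) : ℂ) := by
  simp [dotProduct, schmidtState, tensorI_mulVec_psiPlus, Fintype.sum_prod_type,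
    Finset.sum_mul, mul_assoc, apply_ite (starRingEnd ℂ)]

lemma fidelity_schmidtState_eq {d : ℕ} (lam : Fin d → ℝ) (U : Matrix (Fin d) (Fin d) ℂ) :
    (star (tensorI U *ᵥ psiPlus d) ⬝ᵥ (outer (schmidtState lam) *ᵥ (tensorI U *ᵥ psiPlus d))).re =
      normSq (∑ i, (lam i : ℂ) * U i i) / d := by
  rw [re_star_dotProduct_outer_mulVec, star_schmidtState_dotProduct_tensorI_mulVec_psiPlus,
    normSq_mul, normSq_ofReal, ← sq, div_pow, Real.sq_sqrt d.cast_nonneg, one_pow,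
    mul_one_div]

lemma norm_sum_mul_diag_le_of_unitary {n : Type*} [Fintype n] [DecidableEq n] (lam : n → ℝ)
    (hpos : ∀ i, 0 ≤ lam i) {U : Matrix n n ℂ} (hU : U ∈ unitaryGroup n ℂ) :
    ‖∑ i, (lam i : ℂ) * U i i‖ ≤ ∑ i, lam i := by
  refine (norm_sum_le _ _).trans (Finset.sum_le_sum fun i _ => ?_)
  rw [norm_mul, norm_real, Real.norm_of_nonneg (hpos i)]
  exact mul_le_of_le_one_right (hpos i) (entry_norm_bound_of_unitary hU i i)

theorem fef_pure_schmidt_general (d : ℕ) (lam : Fin d → ℝ)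
    (hpos : ∀ i, 0 ≤ lam i) :
    fef d (outer (fun p : Fin d × Fin d => if p.1 = p.2 then (lam p.1 : ℂ) else 0)) =
      (1 / d) * (∑ i, lam i) ^ 2 := by
  change fef d (outer (schmidtState lam)) = _
  refine IsGreatest.csSup_eq ⟨⟨1, one_mem _, ?_⟩, ?_⟩
  · rw [fidelity_schmidtState_eq]
    simp only [one_apply_eq, mul_one]
    rw [← ofReal_sum, normSq_ofReal, ← sq, one_div_mul_eq_div]
  · rintro x ⟨U, hU, rfl⟩
    rw [fidelity_schmidtState_eq, ← Complex.sq_norm, one_div_mul_eq_div]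
    gcongr
    exact norm_sum_mul_diag_le_of_unitary lam hpos hU

/-- FEF of a pure state in Schmidt form `|ψ⟩ = ∑ᵢ λᵢ|ii⟩` equals `(1/d)(∑ᵢ λᵢ)²`. -/
theorem fef_pure_schmidt (d : ℕ) (hd : 0 < d) (lam : Fin d → ℝ)
    (hpos : ∀ i, 0 ≤ lam i) (hnorm : ∑ i, lam i ^ 2 = 1) :
    fef d (outer (fun p : Fin d × Fin d => if p.1 = p.2 then (lam p.1 : ℂ) else 0)) =
      (1 / d) * (∑ i, lam i) ^ 2 :=
  fef_pure_schmidt_general d lam hpos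
end
end

section
/- For ρ = Σ_{i=1}^d p_i |i, σ(i)⟩⟨i, σ(i)| on C^d ⊗ C^d, where σ is a permutation of {1,...,d} and p_i ≥ 0, Σ p_i = 1, the fully entangled fraction is F(ρ) = 1/d. -/
open Matrix Complex BigOperators Finset

noncomputable section

/-! Since `(U ⊗ I)|ψ⁺⟩ = (1/√d) ∑ U_{ij} |ij⟩`, the overlap with `ρ` is
`(1/d) ∑ᵢ pᵢ |U_{i σ(i)}|²`. Entries of a unitary have modulus at most `1`, so this is at most
`(1/d) ∑ᵢ pᵢ = 1/d`, and the permutation matrix of `σ` attains the bound. -/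

theorem star_indicator_dotProduct {n : Type*} [Fintype n] [DecidableEq n] (a : n) (v : n → ℂ) :
    star (fun q => if q = a then (1 : ℂ) else 0) ⬝ᵥ v = v a := by
  simp [dotProduct, Pi.star_apply, apply_ite star]

theorem star_dotProduct_outer_mulVec {n : Type*} [Fintype n] (ψ v : n → ℂ) :
    star v ⬝ᵥ (outer ψ *ᵥ v) = normSq (star ψ ⬝ᵥ v) := by
  rw [outer, vecMulVec_mulVec, op_smul_eq_smul, dotProduct_smul, smul_eq_mul, ← mul_conj]
  congr 1
  rw [← star_def, star_dotProduct]

theorem re_star_dotProduct_sum_smul_outer_indicator_mulVec {ι n : Type*} [Fintype ι] [Fintype n]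
    [DecidableEq n] (p : ι → ℝ) (f : ι → n) (v : n → ℂ) :
    (star v ⬝ᵥ ((∑ i, p i • outer (fun q => if q = f i then (1 : ℂ) else 0)) *ᵥ v)).re =
      ∑ i, p i * normSq (v (f i)) := by
  rw [sum_mulVec, dotProduct_sum, re_sum]
  refine Finset.sum_congr rfl fun i _ => ?_
  rw [smul_mulVec, dotProduct_smul, star_dotProduct_outer_mulVec, star_indicator_dotProduct,
    real_smul, ← ofReal_mul, ofReal_re]

theorem normSq_tensorI_mulVec_psiPlus {d : ℕ} (U : Matrix (Fin d) (Fin d) ℂ) (q : Fin d × Fin d) :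
    normSq ((tensorI U *ᵥ psiPlus d) q) = normSq (U q.1 q.2) / d := by
  have hentry : (tensorI U *ᵥ psiPlus d) q = U q.1 q.2 * ((1 / Real.sqrt d : ℝ) : ℂ) := by
    simp [tensorI, psiPlus, mulVec, dotProduct, Fintype.sum_prod_type]
  rw [hentry, normSq_mul, normSq_ofReal, div_mul_div_comm, one_mul,
    Real.mul_self_sqrt (Nat.cast_nonneg d), mul_one_div]

theorem mem_unitaryGroup_permMatrix {n : Type*} [Fintype n] [DecidableEq n] (σ : Equiv.Perm n) :
    σ.permMatrix ℂ ∈ unitaryGroup n ℂ := by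
  rw [mem_unitaryGroup_iff', star_eq_conjTranspose, conjTranspose_permMatrix, ← permMatrix_mul,
    mul_inv_cancel, permMatrix_one]

theorem normSq_le_one_of_mem_unitaryGroup {n : Type*} [Fintype n] [DecidableEq n]
    {U : Matrix n n ℂ} (hU : U ∈ unitaryGroup n ℂ) (i j : n) : normSq (U i j) ≤ 1 := by
  rw [normSq_eq_norm_sq]
  exact pow_le_one₀ (norm_nonneg _) (entry_norm_bound_of_unitary hU i j)

theorem fef_permutation_diagonal_general (d : ℕ) (σ : Equiv.Perm (Fin d))
    (p : Fin d → ℝ) (hp : ∀ i, 0 ≤ p i) (hp1 : ∑ i, p i = 1) :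
    fef d (∑ i, p i • outer (fun q : Fin d × Fin d =>
      if q = (i, σ i) then (1 : ℂ) else 0)) = 1 / d := by
  refine IsGreatest.csSup_eq ⟨⟨σ.permMatrix ℂ, mem_unitaryGroup_permMatrix σ, ?_⟩, ?_⟩
  · rw [re_star_dotProduct_sum_smul_outer_indicator_mulVec]
    simp [normSq_tensorI_mulVec_psiPlus, ← Finset.sum_mul, hp1]
  · rintro x ⟨U, hU, rfl⟩
    rw [re_star_dotProduct_sum_smul_outer_indicator_mulVec]
    simp only [normSq_tensorI_mulVec_psiPlus, mul_div, ← Finset.sum_div]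
    gcongr
    calc ∑ i, p i * normSq (U i (σ i)) ≤ ∑ i, p i :=
          Finset.sum_le_sum fun i _ => mul_le_of_le_one_right (hp i)
            (normSq_le_one_of_mem_unitaryGroup hU i (σ i))
      _ = 1 := hp1

/-- For `ρ = ∑ᵢ pᵢ |i, σ(i)⟩⟨i, σ(i)|` with `σ` a permutation, `F(ρ) = 1/d`. -/
theorem fef_permutation_diagonal (d : ℕ) (hd : 0 < d) (σ : Equiv.Perm (Fin d))
    (p : Fin d → ℝ) (hp : ∀ i, 0 ≤ p i) (hp1 : ∑ i, p i = 1) :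
    fef d (∑ i, p i • outer (fun q : Fin d × Fin d =>
      if q = (i, σ i) then (1 : ℂ) else 0)) = 1 / d :=
  fef_permutation_diagonal_general d σ p hp hp1

end
end

section
/- For pure states |φ₁⟩, |φ₂⟩ and their normalized superposition |ψ⟩ = (1/γ)(α|φ₁⟩ + β|φ₂⟩) in C^d ⊗ C^d, the FEF satisfies | |α|F^{1/2}(|φ₁⟩) − |β|F^{1/2}(|φ₂⟩) | ≤ |γ|F^{1/2}(|ψ⟩) ≤ |α|F^{1/2}(|φ₁⟩) + |β|F^{1/2}(|φ₂⟩). -/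
open Matrix Complex BigOperators Finset

noncomputable section

lemma mv_eq (d : ℕ) (U : Matrix (Fin d) (Fin d) ℂ) :
    tensorI U *ᵥ psiPlus d = fun p => U p.1 p.2 * ((1 / Real.sqrt d : ℝ) : ℂ) := by
  funext p
  simp [mulVec, dotProduct, tensorI, psiPlus, Fintype.sum_prod_type, mul_ite,
    Finset.sum_ite_eq, Finset.sum_ite_eq']

lemma quad_eq {n : Type*} [Fintype n] (φ v : n → ℂ) :
    (star v ⬝ᵥ (outer φ *ᵥ v)).re = ‖star v ⬝ᵥ φ‖ ^ 2 := by
  have h1 : star v ⬝ᵥ (outer φ *ᵥ v) = (star v ⬝ᵥ φ) * (star φ ⬝ᵥ v) := by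
    simp only [outer, dotProduct, mulVec, vecMulVec, Pi.star_apply, Finset.sum_mul,
      Finset.mul_sum, of_apply]
    rw [Finset.sum_comm]
    exact Finset.sum_congr rfl fun p _ => Finset.sum_congr rfl fun q _ => by ring
  have h2 : star φ ⬝ᵥ v = starRingEnd ℂ (star v ⬝ᵥ φ) := by
    simp only [dotProduct, map_sum, _root_.map_mul, Pi.star_apply, Complex.conj_conj,
      RCLike.star_def]
    exact Finset.sum_congr rfl fun i _ => mul_comm _ _
  rw [h1, h2, Complex.mul_conj]
  rw [Complex.ofReal_re, Complex.normSq_eq_norm_sq]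

/-- the vector `(U ⊗ I)|ψ⁺⟩` has norm-squared 1 for unitary `U`. -/
lemma vnorm (d : ℕ) (hd : 0 < d) (U : Matrix (Fin d) (Fin d) ℂ)
    (hU : U ∈ Matrix.unitaryGroup (Fin d) ℂ) :
    ∑ p : Fin d × Fin d, ‖(tensorI U *ᵥ psiPlus d) p‖ ^ 2 = 1 := by
  rw [mv_eq]
  have hUU : Uᴴ * U = 1 := Matrix.UnitaryGroup.star_mul_self ⟨U, hU⟩
  have hcol : ∀ j, ∑ i, ‖U i j‖ ^ 2 = 1 := by
    intro j
    have := congrArg (fun M => (M j j).re) hUU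
    simp only [Matrix.mul_apply, Matrix.conjTranspose_apply, Matrix.one_apply_eq] at this
    rw [Complex.re_sum, Complex.one_re] at this
    rw [← this]
    refine Finset.sum_congr rfl fun i _ => ?_
    rw [RCLike.star_def, mul_comm, Complex.mul_conj]
    rw [Complex.ofReal_re, Complex.normSq_eq_norm_sq]
  have hsd : Real.sqrt d ≠ 0 := by positivity
  have : ∀ p : Fin d × Fin d, ‖U p.1 p.2 * ((1 / Real.sqrt d : ℝ) : ℂ)‖ ^ 2
      = ‖U p.1 p.2‖ ^ 2 * (1 / d) := by
    intro p
    rw [norm_mul, mul_pow, Complex.norm_real]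
    congr 1
    rw [Real.norm_eq_abs, _root_.abs_of_nonneg (by positivity), div_pow, one_pow,
      Real.sq_sqrt (Nat.cast_nonneg d)]
  simp only [this]
  rw [← Finset.sum_mul, Fintype.sum_prod_type_right]
  simp only [hcol]
  simp
  field_simp

lemma cs_bound {n : Type*} [Fintype n] (v φ : n → ℂ)
    (hv : ∑ p, ‖v p‖ ^ 2 = 1) (hφ : ∑ p, ‖φ p‖ ^ 2 = 1) :
    ‖star v ⬝ᵥ φ‖ ≤ 1 := by
  have h := @norm_inner_le_norm ℂ (EuclideanSpace ℂ n) _ _ _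
    ((WithLp.equiv 2 _).symm v) ((WithLp.equiv 2 _).symm φ)
  rw [show inner ℂ ((WithLp.equiv 2 (n → ℂ)).symm v) ((WithLp.equiv 2 (n → ℂ)).symm φ) = star v ⬝ᵥ φ from
    (dotProduct_comm _ _).symm] at h
  have hnv : ‖(WithLp.equiv 2 (n → ℂ)).symm v‖ = 1 := by
    rw [EuclideanSpace.norm_eq]
    simp only [WithLp.equiv_symm_apply, WithLp.ofLp_toLp]
    rw [show ∀ f : n → ℝ, (∑ p, f p) = ∑ p, f p from fun _ => rfl]
    rw [hv, Real.sqrt_one]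
  have hnφ : ‖(WithLp.equiv 2 (n → ℂ)).symm φ‖ = 1 := by
    rw [EuclideanSpace.norm_eq]
    simp only [WithLp.equiv_symm_apply, WithLp.ofLp_toLp]
    rw [hφ, Real.sqrt_one]
  rw [hnv, hnφ, mul_one] at h
  exact h

lemma fef_outer_eq (d : ℕ) (φ : Fin d × Fin d → ℂ) :
    fef d (outer φ) = sSup { x : ℝ | ∃ U ∈ Matrix.unitaryGroup (Fin d) ℂ,
      x = ‖star (tensorI U *ᵥ psiPlus d) ⬝ᵥ φ‖ ^ 2 } := by
  unfold fef
  congr 1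
  ext x
  constructor
  · rintro ⟨U, hU, rfl⟩; exact ⟨U, hU, (quad_eq φ _).symm ▸ rfl⟩
  · rintro ⟨U, hU, rfl⟩; exact ⟨U, hU, (quad_eq φ _).symm⟩

lemma fef_nonempty (d : ℕ) (φ : Fin d × Fin d → ℂ) :
    { x : ℝ | ∃ U ∈ Matrix.unitaryGroup (Fin d) ℂ,
      x = ‖star (tensorI U *ᵥ psiPlus d) ⬝ᵥ φ‖ ^ 2 }.Nonempty :=
  ⟨_, 1, Submonoid.one_mem _, rfl⟩

lemma fef_bdd (d : ℕ) (hd : 0 < d) (φ : Fin d × Fin d → ℂ)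
    (hφ : ∑ q, ‖φ q‖ ^ 2 = 1) :
    ∀ x ∈ { x : ℝ | ∃ U ∈ Matrix.unitaryGroup (Fin d) ℂ,
      x = ‖star (tensorI U *ᵥ psiPlus d) ⬝ᵥ φ‖ ^ 2 }, x ≤ 1 := by
  rintro x ⟨U, hU, rfl⟩
  have h := cs_bound _ φ (vnorm d hd U hU) hφ
  nlinarith [norm_nonneg (star (tensorI U *ᵥ psiPlus d) ⬝ᵥ φ)]

/-- each value is below the sqrt of the sup -/
lemma cval_le_sqrt (d : ℕ) (hd : 0 < d) (φ : Fin d × Fin d → ℂ)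
    (hφ : ∑ q, ‖φ q‖ ^ 2 = 1) (U : Matrix (Fin d) (Fin d) ℂ)
    (hU : U ∈ Matrix.unitaryGroup (Fin d) ℂ) :
    ‖star (tensorI U *ᵥ psiPlus d) ⬝ᵥ φ‖ ≤ Real.sqrt (fef d (outer φ)) := by
  rw [fef_outer_eq]
  have hmem : ‖star (tensorI U *ᵥ psiPlus d) ⬝ᵥ φ‖ ^ 2 ∈
      { x : ℝ | ∃ U ∈ Matrix.unitaryGroup (Fin d) ℂ,
        x = ‖star (tensorI U *ᵥ psiPlus d) ⬝ᵥ φ‖ ^ 2 } := ⟨U, hU, rfl⟩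
  have hle := le_csSup ⟨1, fun x hx => fef_bdd d hd φ hφ x hx⟩ hmem
  calc ‖star (tensorI U *ᵥ psiPlus d) ⬝ᵥ φ‖
      = Real.sqrt (‖star (tensorI U *ᵥ psiPlus d) ⬝ᵥ φ‖ ^ 2) :=
        (Real.sqrt_sq (norm_nonneg _)).symm
    _ ≤ _ := Real.sqrt_le_sqrt hle

/-- if every value is bounded, so is c * sqrt(fef) -/
lemma sqrt_fef_le (d : ℕ) (hd : 0 < d) (φ : Fin d × Fin d → ℂ) (c A : ℝ)
    (hc : 0 ≤ c) (hA : 0 ≤ A)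
    (h : ∀ U ∈ Matrix.unitaryGroup (Fin d) ℂ,
      c * ‖star (tensorI U *ᵥ psiPlus d) ⬝ᵥ φ‖ ≤ A) :
    c * Real.sqrt (fef d (outer φ)) ≤ A := by
  rcases eq_or_lt_of_le hc with hc0 | hc0
  · simpa [← hc0] using hA
  rw [fef_outer_eq]
  have hsup : sSup { x : ℝ | ∃ U ∈ Matrix.unitaryGroup (Fin d) ℂ,
      x = ‖star (tensorI U *ᵥ psiPlus d) ⬝ᵥ φ‖ ^ 2 } ≤ (A / c) ^ 2 := by
    refine csSup_le (fef_nonempty d φ) ?_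
    rintro x ⟨U, hU, rfl⟩
    have := h U hU
    have h1 : ‖star (tensorI U *ᵥ psiPlus d) ⬝ᵥ φ‖ ≤ A / c :=
      (le_div_iff₀' hc0).2 this
    nlinarith [norm_nonneg (star (tensorI U *ᵥ psiPlus d) ⬝ᵥ φ)]
  have h2 : Real.sqrt (sSup { x : ℝ | ∃ U ∈ Matrix.unitaryGroup (Fin d) ℂ,
      x = ‖star (tensorI U *ᵥ psiPlus d) ⬝ᵥ φ‖ ^ 2 }) ≤ A / c := by
    calc _ ≤ Real.sqrt ((A / c) ^ 2) := Real.sqrt_le_sqrt hsup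
      _ = A / c := Real.sqrt_sq (by positivity)
  calc c * Real.sqrt _ ≤ c * (A / c) := by
        exact mul_le_mul_of_nonneg_left h2 hc
    _ = A := by field_simp


/-- FEF of a superposition of two pure states:
`| |α|√F(φ₁) − |β|√F(φ₂) | ≤ |γ|√F(ψ) ≤ |α|√F(φ₁) + |β|√F(φ₂)`. -/
theorem fef_superposition_two (d : ℕ) (hd : 0 < d)
    (φ₁ φ₂ ψ : Fin d × Fin d → ℂ) (α β γ : ℂ)
    (h₁ : ∑ q, ‖φ₁ q‖ ^ 2 = 1) (h₂ : ∑ q, ‖φ₂ q‖ ^ 2 = 1)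
    (hψn : ∑ q, ‖ψ q‖ ^ 2 = 1)
    (hsum : γ • ψ = α • φ₁ + β • φ₂) :
    |‖α‖ * Real.sqrt (fef d (outer φ₁)) - ‖β‖ * Real.sqrt (fef d (outer φ₂))| ≤
        ‖γ‖ * Real.sqrt (fef d (outer ψ)) ∧
      ‖γ‖ * Real.sqrt (fef d (outer ψ)) ≤
        ‖α‖ * Real.sqrt (fef d (outer φ₁)) + ‖β‖ * Real.sqrt (fef d (outer φ₂)) := by
  set A := ‖α‖ * Real.sqrt (fef d (outer φ₁)) with hA
  set B := ‖β‖ * Real.sqrt (fef d (outer φ₂)) with hB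
  set C := ‖γ‖ * Real.sqrt (fef d (outer ψ)) with hC
  have hfefpos : ∀ φ : Fin d × Fin d → ℂ, (hφ : ∑ q, ‖φ q‖ ^ 2 = 1) →
      0 ≤ Real.sqrt (fef d (outer φ)) := fun _ _ => Real.sqrt_nonneg _
  have hApos : 0 ≤ A := mul_nonneg (norm_nonneg _) (Real.sqrt_nonneg _)
  have hBpos : 0 ≤ B := mul_nonneg (norm_nonneg _) (Real.sqrt_nonneg _)
  have hCpos : 0 ≤ C := mul_nonneg (norm_nonneg _) (Real.sqrt_nonneg _)
  -- linearity of cval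
  have hlin : ∀ v : Fin d × Fin d → ℂ,
      γ * (star v ⬝ᵥ ψ) = α * (star v ⬝ᵥ φ₁) + β * (star v ⬝ᵥ φ₂) := by
    intro v
    have h1 : star v ⬝ᵥ (γ • ψ) = star v ⬝ᵥ (α • φ₁ + β • φ₂) := by rw [hsum]
    simpa [dotProduct_add, dotProduct_smul, smul_eq_mul] using h1
  have key1 : ∀ U ∈ Matrix.unitaryGroup (Fin d) ℂ,
      ‖γ‖ * ‖star (tensorI U *ᵥ psiPlus d) ⬝ᵥ ψ‖ ≤ A + B := by
    intro U hU
    set v := tensorI U *ᵥ psiPlus d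
    calc ‖γ‖ * ‖star v ⬝ᵥ ψ‖ = ‖γ * (star v ⬝ᵥ ψ)‖ := (norm_mul _ _).symm
      _ = ‖α * (star v ⬝ᵥ φ₁) + β * (star v ⬝ᵥ φ₂)‖ := by rw [hlin]
      _ ≤ ‖α * (star v ⬝ᵥ φ₁)‖ + ‖β * (star v ⬝ᵥ φ₂)‖ := norm_add_le _ _
      _ = ‖α‖ * ‖star v ⬝ᵥ φ₁‖ + ‖β‖ * ‖star v ⬝ᵥ φ₂‖ := by rw [norm_mul, norm_mul]
      _ ≤ A + B := add_le_add
          (mul_le_mul_of_nonneg_left (cval_le_sqrt d hd φ₁ h₁ U hU) (norm_nonneg _))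
          (mul_le_mul_of_nonneg_left (cval_le_sqrt d hd φ₂ h₂ U hU) (norm_nonneg _))
  have upper : C ≤ A + B :=
    sqrt_fef_le d hd ψ ‖γ‖ (A + B) (norm_nonneg _) (by linarith) key1
  have key2 : ∀ U ∈ Matrix.unitaryGroup (Fin d) ℂ,
      ‖α‖ * ‖star (tensorI U *ᵥ psiPlus d) ⬝ᵥ φ₁‖ ≤ C + B := by
    intro U hU
    set v := tensorI U *ᵥ psiPlus d
    have : α * (star v ⬝ᵥ φ₁) = γ * (star v ⬝ᵥ ψ) - β * (star v ⬝ᵥ φ₂) := by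
      rw [hlin]; ring
    calc ‖α‖ * ‖star v ⬝ᵥ φ₁‖ = ‖α * (star v ⬝ᵥ φ₁)‖ := (norm_mul _ _).symm
      _ = ‖γ * (star v ⬝ᵥ ψ) - β * (star v ⬝ᵥ φ₂)‖ := by rw [this]
      _ ≤ ‖γ * (star v ⬝ᵥ ψ)‖ + ‖β * (star v ⬝ᵥ φ₂)‖ := norm_sub_le _ _
      _ = ‖γ‖ * ‖star v ⬝ᵥ ψ‖ + ‖β‖ * ‖star v ⬝ᵥ φ₂‖ := by rw [norm_mul, norm_mul]
      _ ≤ C + B := add_le_add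
          (mul_le_mul_of_nonneg_left (cval_le_sqrt d hd ψ hψn U hU) (norm_nonneg _))
          (mul_le_mul_of_nonneg_left (cval_le_sqrt d hd φ₂ h₂ U hU) (norm_nonneg _))
  have low1 : A ≤ C + B :=
    sqrt_fef_le d hd φ₁ ‖α‖ (C + B) (norm_nonneg _) (by linarith) key2
  have key3 : ∀ U ∈ Matrix.unitaryGroup (Fin d) ℂ,
      ‖β‖ * ‖star (tensorI U *ᵥ psiPlus d) ⬝ᵥ φ₂‖ ≤ C + A := by
    intro U hU
    set v := tensorI U *ᵥ psiPlus d
    have : β * (star v ⬝ᵥ φ₂) = γ * (star v ⬝ᵥ ψ) - α * (star v ⬝ᵥ φ₁) := by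
      rw [hlin]; ring
    calc ‖β‖ * ‖star v ⬝ᵥ φ₂‖ = ‖β * (star v ⬝ᵥ φ₂)‖ := (norm_mul _ _).symm
      _ = ‖γ * (star v ⬝ᵥ ψ) - α * (star v ⬝ᵥ φ₁)‖ := by rw [this]
      _ ≤ ‖γ * (star v ⬝ᵥ ψ)‖ + ‖α * (star v ⬝ᵥ φ₁)‖ := norm_sub_le _ _
      _ = ‖γ‖ * ‖star v ⬝ᵥ ψ‖ + ‖α‖ * ‖star v ⬝ᵥ φ₁‖ := by rw [norm_mul, norm_mul]
      _ ≤ C + A := add_le_add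
          (mul_le_mul_of_nonneg_left (cval_le_sqrt d hd ψ hψn U hU) (norm_nonneg _))
          (mul_le_mul_of_nonneg_left (cval_le_sqrt d hd φ₁ h₁ U hU) (norm_nonneg _))
  have low2 : B ≤ C + A :=
    sqrt_fef_le d hd φ₂ ‖β‖ (C + A) (norm_nonneg _) (by linarith) key3
  exact ⟨abs_sub_le_iff.2 ⟨by linarith, by linarith⟩, upper⟩
end
end
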